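/- arXiv:2011.11391 — 2 statements merged into one kernel-verified Lean document; each statement's English description precedes it below -/
import Mathlib

section
/- Under the assumptions of the eigenvalue bound (mᵀ Gᵀ Σ_L^{-1} G m ≥ β²η²C^{-2}‖Πm‖² and mᵀ Σ_0^{-1} m ≥ C^{-2}‖m‖² for all m), if (m_i)_{i=1}^M is an orthonormal eigenbasis of Σ_post with eigenvalues λ_i, then trace(Σ_post) = ∑_i λ_i ≤ C² ∑_{i=1}^M ((1/σ²) β² η² ‖Π m_i‖² + 1)^{-1}, and moreover ∑_{i=1}^M ‖Π m_i‖² = dim X⊥. -/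
open Matrix

lemma dps_nonneg {n : ℕ} (v : Fin n → ℝ) : 0 ≤ v ⬝ᵥ v :=
  Finset.sum_nonneg fun i _ => mul_self_nonneg _

/-- Trace equals sum of quadratic forms over an orthonormal basis. -/
lemma trace_eq_sum_quadform {M : ℕ} (A : Matrix (Fin M) (Fin M) ℝ)
    (m : Fin M → (Fin M → ℝ))
    (horth : ∀ i j, m i ⬝ᵥ m j = if i = j then (1 : ℝ) else 0) :
    A.trace = ∑ i, m i ⬝ᵥ A.mulVec (m i) := by
  classical
  set Q : Matrix (Fin M) (Fin M) ℝ := Matrix.of fun i j => m j i with hQdef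
  have hQ : Qᵀ * Q = 1 := by
    ext i j
    have := horth i j
    simpa [hQdef, Matrix.mul_apply, Matrix.one_apply, dotProduct] using this
  have hQ' : Q * Qᵀ = 1 := mul_eq_one_comm.mp hQ
  have h1 : A.trace = (Qᵀ * (A * Q)).trace := by
    rw [Matrix.trace_mul_comm, Matrix.mul_assoc, hQ', Matrix.mul_one]
  rw [h1]
  unfold Matrix.trace
  apply Finset.sum_congr rfl
  intro i _
  simp only [Matrix.diag_apply, Matrix.mul_apply, hQdef, Matrix.of_apply,
    Matrix.transpose_apply, dotProduct, Matrix.mulVec, Finset.mul_sum, Finset.sum_mul]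

/-- With an orthonormal eigenbasis `(m i)` of the posterior covariance `Σ_post` with
eigenvalues `lam i`, the trace of `Σ_post` equals `∑ lam i` and is bounded by
`C² ∑ i ((1/σ²) β² η² ‖Π m i‖² + 1)⁻¹`; moreover `∑ i ‖Π m i‖² = dim X⊥`. -/
theorem posterior_trace_observability_bound
    {M K : ℕ} (G : Matrix (Fin K) (Fin M) ℝ)
    (SL : Matrix (Fin K) (Fin K) ℝ) (S0 : Matrix (Fin M) (Fin M) ℝ)
    (hSL : SL.PosDef) (hS0 : S0.PosDef) (σ : ℝ) (hσ : 0 < σ)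
    (β η C : ℝ) (hβ : 0 ≤ β) (hη : 0 ≤ η) (hC : 0 < C)
    (Xperp : Submodule ℝ (Fin M → ℝ))
    (P : Matrix (Fin M) (Fin M) ℝ) (hPsym : P.IsSymm) (hPidem : P * P = P)
    (hPrange : LinearMap.range P.mulVecLin = Xperp)
    (hobs : ∀ m : Fin M → ℝ,
      m ⬝ᵥ (Gᵀ * SL⁻¹ * G).mulVec m ≥
        β ^ 2 * η ^ 2 / C ^ 2 * ((P.mulVec m) ⬝ᵥ (P.mulVec m)))
    (hprior : ∀ m : Fin M → ℝ, m ⬝ᵥ S0⁻¹.mulVec m ≥ (m ⬝ᵥ m) / C ^ 2)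
    (Spost : Matrix (Fin M) (Fin M) ℝ)
    (hSpost : Spost = ((1 / σ ^ 2) • (Gᵀ * SL⁻¹ * G) + S0⁻¹)⁻¹)
    (m : Fin M → (Fin M → ℝ)) (lam : Fin M → ℝ)
    (horth : ∀ i j, m i ⬝ᵥ m j = if i = j then (1 : ℝ) else 0)
    (heig : ∀ i, Spost.mulVec (m i) = lam i • m i) :
    Spost.trace = ∑ i, lam i ∧
    Spost.trace ≤ C ^ 2 * ∑ i,
      ((1 / σ ^ 2) * β ^ 2 * η ^ 2 * ((P.mulVec (m i)) ⬝ᵥ (P.mulVec (m i))) + 1)⁻¹ ∧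
    ∑ i, (P.mulVec (m i)) ⬝ᵥ (P.mulVec (m i)) = (Module.finrank ℝ Xperp : ℝ) := by
  classical
  -- normalization
  have hmi_self : ∀ i, m i ⬝ᵥ m i = 1 := by intro i; simpa using horth i i
  have hmi_ne : ∀ i, m i ≠ 0 := by
    intro i h
    have := hmi_self i
    rw [h] at this
    simpa using this
  -- Part 1
  have htrace : Spost.trace = ∑ i, lam i := by
    rw [trace_eq_sum_quadform Spost m horth]
    apply Finset.sum_congr rfl
    intro i _
    rw [heig i, dotProduct_smul, hmi_self i]
    simp
  refine ⟨htrace, ?_, ?_⟩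
  · -- Part 2
    set A : Matrix (Fin M) (Fin M) ℝ := (1 / σ ^ 2) • (Gᵀ * SL⁻¹ * G) + S0⁻¹ with hAdef
    have hB : (Gᵀ * SL⁻¹ * G).PosSemidef := by
      have := hSL.inv.posSemidef.conjTranspose_mul_mul_same G
      simpa [Matrix.conjTranspose_eq_transpose_of_trivial] using this
    have hApd : A.PosDef := by
      rw [Matrix.posDef_iff_dotProduct_mulVec]
      constructor
      · show Aᴴ = A
        rw [hAdef, Matrix.conjTranspose_add, Matrix.conjTranspose_smul, hB.1.eq, hS0.inv.1.eq]
        simp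
      · intro x hx
        have e2 := hobs x
        have e3 := hprior x
        have hxx : 0 < x ⬝ᵥ x := by
          rcases (dps_nonneg x).lt_or_eq with h | h
          · exact h
          · exact absurd ((dotProduct_self_eq_zero).mp h.symm) hx
        have hP0 : 0 ≤ (P.mulVec x) ⬝ᵥ (P.mulVec x) := dps_nonneg _
        have hc : 0 ≤ β ^ 2 * η ^ 2 / C ^ 2 := by positivity
        have hσ2 : (0:ℝ) < 1 / σ ^ 2 := by positivity
        have hxA : x ⬝ᵥ A.mulVec x
            = (1 / σ ^ 2) * (x ⬝ᵥ (Gᵀ * SL⁻¹ * G).mulVec x) + x ⬝ᵥ S0⁻¹.mulVec x := by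
          rw [hAdef]
          simp [Matrix.add_mulVec, Matrix.smul_mulVec, dotProduct_add, dotProduct_smul,
            smul_eq_mul]
        have hB0 : 0 ≤ x ⬝ᵥ (Gᵀ * SL⁻¹ * G).mulVec x :=
          le_trans (mul_nonneg hc hP0) e2
        have hS0' : 0 < x ⬝ᵥ S0⁻¹.mulVec x :=
          lt_of_lt_of_le (by positivity) e3
        have : 0 < x ⬝ᵥ A.mulVec x := by
          rw [hxA]
          have := mul_nonneg hσ2.le hB0
          linarith
        simpa using this
    have hAS : A * Spost = 1 := by
      rw [hSpost, Matrix.mul_nonsing_inv]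
      exact hApd.det_pos.ne'.isUnit
    have hSpd : Spost.PosDef := by rw [hSpost]; exact hApd.inv
    have hlam_pos : ∀ i, 0 < lam i := by
      intro i
      have := hSpd.dotProduct_mulVec_pos (hmi_ne i)
      rw [heig i] at this
      simpa [dotProduct_smul, hmi_self i] using this
    -- quadratic form of A at m i equals 1 / lam i
    have hquad : ∀ i, m i ⬝ᵥ A.mulVec (m i) = 1 / lam i := by
      intro i
      have h1 : A.mulVec (Spost.mulVec (m i)) = m i := by
        rw [Matrix.mulVec_mulVec, hAS, Matrix.one_mulVec]
      rw [heig i] at h1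
      have h2 : lam i • A.mulVec (m i) = m i := by
        rw [Matrix.mulVec_smul] at h1
        exact h1
      have h3 : lam i * (m i ⬝ᵥ A.mulVec (m i)) = 1 := by
        calc lam i * (m i ⬝ᵥ A.mulVec (m i)) = m i ⬝ᵥ (lam i • A.mulVec (m i)) := by
              rw [dotProduct_smul]; simp
          _ = 1 := by rw [h2, hmi_self]
      rw [eq_div_iff (hlam_pos i).ne']
      linear_combination h3
    -- the lower bound on the quadratic form
    have hDpos : ∀ i, 0 < (1 / σ ^ 2) * β ^ 2 * η ^ 2 * ((P.mulVec (m i)) ⬝ᵥ (P.mulVec (m i))) + 1 := by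
      intro i
      have h0 : 0 ≤ (P.mulVec (m i)) ⬝ᵥ (P.mulVec (m i)) := dps_nonneg _
      have : 0 ≤ (1 / σ ^ 2) * β ^ 2 * η ^ 2 := by positivity
      nlinarith
    have hbound : ∀ i, lam i ≤ C ^ 2 *
        ((1 / σ ^ 2) * β ^ 2 * η ^ 2 * ((P.mulVec (m i)) ⬝ᵥ (P.mulVec (m i))) + 1)⁻¹ := by
      intro i
      set D := (1 / σ ^ 2) * β ^ 2 * η ^ 2 * ((P.mulVec (m i)) ⬝ᵥ (P.mulVec (m i))) + 1 with hD
      have hDp := hDpos i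
      have hq : m i ⬝ᵥ A.mulVec (m i) ≥ D / C ^ 2 := by
        have e1 : m i ⬝ᵥ A.mulVec (m i)
            = (1 / σ ^ 2) * (m i ⬝ᵥ (Gᵀ * SL⁻¹ * G).mulVec (m i)) + m i ⬝ᵥ S0⁻¹.mulVec (m i) := by
          rw [hAdef]
          simp [Matrix.add_mulVec, Matrix.smul_mulVec, dotProduct_add, dotProduct_smul,
            smul_eq_mul]
        have e2 := hobs (m i)
        have e3 := hprior (m i)
        rw [hmi_self i] at e3
        have hσ2 : (0:ℝ) < 1 / σ ^ 2 := by positivity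
        rw [e1]
        have e4 : (1 / σ ^ 2) * (m i ⬝ᵥ (Gᵀ * SL⁻¹ * G).mulVec (m i))
            ≥ (1 / σ ^ 2) * (β ^ 2 * η ^ 2 / C ^ 2 * ((P.mulVec (m i)) ⬝ᵥ (P.mulVec (m i)))) :=
          mul_le_mul_of_nonneg_left e2 hσ2.le
        rw [hD]
        have : D / C ^ 2 = (1 / σ ^ 2) * (β ^ 2 * η ^ 2 / C ^ 2 * ((P.mulVec (m i)) ⬝ᵥ (P.mulVec (m i)))) + 1 / C ^ 2 := by
          rw [hD]; field_simp
        rw [hD] at this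
        linarith
      rw [hquad i] at hq
      have hl := hlam_pos i
      rw [ge_iff_le, div_le_div_iff₀ (by positivity) hl] at hq
      rw [← div_eq_mul_inv, le_div_iff₀ hDp, ← hD]
      have hcomm : D * lam i = lam i * D := mul_comm _ _
      linarith
    calc Spost.trace = ∑ i, lam i := htrace
      _ ≤ ∑ i, C ^ 2 *
          ((1 / σ ^ 2) * β ^ 2 * η ^ 2 * ((P.mulVec (m i)) ⬝ᵥ (P.mulVec (m i))) + 1)⁻¹ :=
          Finset.sum_le_sum fun i _ => hbound i
      _ = C ^ 2 * ∑ i, ((1 / σ ^ 2) * β ^ 2 * η ^ 2 * ((P.mulVec (m i)) ⬝ᵥ (P.mulVec (m i))) + 1)⁻¹ := by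
          rw [Finset.mul_sum]
  · -- Part 3
    have key : ∀ x : Fin M → ℝ, (P.mulVec x) ⬝ᵥ (P.mulVec x) = x ⬝ᵥ P.mulVec x := by
      intro x
      calc (P.mulVec x) ⬝ᵥ (P.mulVec x)
          = (x ᵥ* Pᵀ) ⬝ᵥ (P.mulVec x) := by rw [Matrix.vecMul_transpose]
        _ = x ⬝ᵥ (Pᵀ.mulVec (P.mulVec x)) := (Matrix.dotProduct_mulVec x Pᵀ (P.mulVec x)).symm
        _ = x ⬝ᵥ ((Pᵀ * P).mulVec x) := by rw [Matrix.mulVec_mulVec]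
        _ = x ⬝ᵥ P.mulVec x := by rw [hPsym.eq, hPidem]
    have hsum : ∑ i, (P.mulVec (m i)) ⬝ᵥ (P.mulVec (m i)) = P.trace := by
      rw [trace_eq_sum_quadform P m horth]
      exact Finset.sum_congr rfl fun i _ => key (m i)
    have hproj : LinearMap.IsProj Xperp P.mulVecLin := by
      constructor
      · intro x
        rw [← hPrange]
        exact LinearMap.mem_range_self _ x
      · intro x hx
        rw [← hPrange] at hx
        obtain ⟨y, rfl⟩ := hx
        show P.mulVec (P.mulVec y) = P.mulVec y
        rw [Matrix.mulVec_mulVec, hPidem]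
    have htr := hproj.trace
    rw [LinearMap.trace_eq_matrix_trace ℝ (Pi.basisFun ℝ (Fin M)),
      LinearMap.toMatrix_eq_toMatrix'] at htr
    have hPt : LinearMap.toMatrix' P.mulVecLin = P := LinearMap.toMatrix'_toLin' P
    rw [hPt] at htr
    rw [hsum, htr]
end

section
/- Let U be a Hilbert space, L : U → R^K linear bounded with γ := sup_{u≠0} ‖Lu‖_{Σ_L^{-1}}/‖u‖_U, and let u, u_R : R^M → U be linear maps such that ‖u(m) − u_R(m)‖_U ≤ ε ‖u(m)‖_U for all m, with 0 ≤ ε < 1. Define β := inf{‖Lu(m)‖_{Σ_L^{-1}}/‖u(m)‖_U : u(m) ≠ 0} and β_R := inf{‖Lu_R(m)‖_{Σ_L^{-1}}/‖u_R(m)‖_U : u_R(m) ≠ 0}. Then β ≥ (1−ε) β_R − γ ε. -/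
/-! The weighted norm `‖y‖_A` is the Euclidean norm of `A^{1/2} y`, so `v ↦ ‖L v‖_{Σ_L⁻¹}` is the
norm of a bounded linear map `f`, and `‖f v‖ ≤ γ ‖v‖`. For `x = u m` and `y = u_R m` we have
`‖y‖ ≥ (1 - ε) ‖x‖`, hence
`‖f x‖ ≥ ‖f y‖ - ‖f (x - y)‖ ≥ β_R ‖y‖ - γ ε ‖x‖ ≥ ((1 - ε) β_R - γ ε) ‖x‖`,
and taking the infimum over `m` gives the bound. As `ε < 1`, `u m` and `u_R m` vanish together;
if they vanish for every `m`, both infima are the junk value `sInf ∅ = 0` and the bound reduces to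
`γ ε ≥ 0`. -/

open Matrix

/-- The norm `‖x‖_A = √(xᵀ A x)` induced by an s.p.d. matrix `A`. -/
noncomputable def wNorm {n : ℕ} (A : Matrix (Fin n) (Fin n) ℝ)
    (x : EuclideanSpace ℝ (Fin n)) : ℝ :=
  Real.sqrt (x ⬝ᵥ A.mulVec x)

open scoped MatrixOrder

theorem wNorm_eq_norm_toEuclideanLin_sqrt {n : ℕ} {A : Matrix (Fin n) (Fin n) ℝ}
    (hA : A.PosSemidef) (x : EuclideanSpace ℝ (Fin n)) :
    wNorm A x = ‖(CFC.sqrt A).toEuclideanLin x‖ := by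
  have hsa : (CFC.sqrt A)ᴴ = CFC.sqrt A := (CFC.sqrt_nonneg A).posSemidef.isHermitian
  rw [norm_eq_sqrt_real_inner, ← LinearMap.adjoint_inner_right,
    ← Matrix.toEuclideanLin_conjTranspose_eq_adjoint, hsa, EuclideanSpace.inner_eq_star_dotProduct]
  simp only [ofLp_toLpLin, toLin'_apply, mulVec_mulVec, CFC.sqrt_mul_sqrt_self A hA.nonneg]
  rw [wNorm, dotProduct_comm]
  rfl

section RatioBounds

variable {E F 𝓕 ι : Type*} [NormedAddCommGroup E] [SeminormedAddCommGroup F]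

theorem eq_zero_iff_of_norm_sub_le_mul {x y : E} {ε : ℝ} (hε : ε < 1)
    (h : ‖x - y‖ ≤ ε * ‖x‖) : x = 0 ↔ y = 0 := by
  constructor
  · rintro rfl
    simpa using h
  · rintro rfl
    rw [sub_zero] at h
    exact norm_le_zero_iff.mp (by nlinarith [norm_nonneg x])

theorem norm_apply_le_sSup_ratio_mul [NormedSpace ℝ E] [NormedSpace ℝ F] (f : E →L[ℝ] F)
    (v : E) :
    ‖f v‖ ≤ sSup {r : ℝ | ∃ v : E, v ≠ 0 ∧ r = ‖f v‖ / ‖v‖} * ‖v‖ := by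
  rcases eq_or_ne v 0 with rfl | hv
  · simp
  have hbdd : BddAbove {r : ℝ | ∃ v : E, v ≠ 0 ∧ r = ‖f v‖ / ‖v‖} := by
    refine ⟨‖f‖, ?_⟩
    rintro _ ⟨w, hw, rfl⟩
    exact div_le_of_le_mul₀ (norm_nonneg w) (norm_nonneg f) (f.le_opNorm w)
  rw [← div_le_iff₀ (norm_pos_iff.mpr hv)]
  exact le_csSup hbdd ⟨v, hv, rfl⟩

theorem sInf_ratio_mul_norm_le (f : E → F) (g : ι → E) {m : ι} (hm : g m ≠ 0) :
    sInf {r : ℝ | ∃ m, g m ≠ 0 ∧ r = ‖f (g m)‖ / ‖g m‖} * ‖g m‖ ≤ ‖f (g m)‖ := by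
  rw [← le_div_iff₀ (norm_pos_iff.mpr hm)]
  refine csInf_le ⟨0, ?_⟩ ⟨m, hm, rfl⟩
  rintro _ ⟨m, -, rfl⟩
  positivity

variable [FunLike 𝓕 E F] [AddMonoidHomClass 𝓕 E F]

theorem mul_norm_le_norm_apply_of_norm_sub_le (f : 𝓕) {γ β ε : ℝ} (hγ : 0 ≤ γ)
    (hfγ : ∀ v, ‖f v‖ ≤ γ * ‖v‖) (hβ : 0 ≤ β) {x y : E} (hxy : ‖x - y‖ ≤ ε * ‖x‖)
    (hfy : β * ‖y‖ ≤ ‖f y‖) :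
    ((1 - ε) * β - γ * ε) * ‖x‖ ≤ ‖f x‖ := by
  have hy : (1 - ε) * ‖x‖ ≤ ‖y‖ := by linarith [norm_sub_norm_le x y]
  have hfxy : ‖f (x - y)‖ ≤ γ * (ε * ‖x‖) :=
    (hfγ _).trans (mul_le_mul_of_nonneg_left hxy hγ)
  have hf : ‖f y‖ - ‖f x‖ ≤ ‖f (x - y)‖ := by
    simpa [map_sub, norm_sub_rev] using norm_sub_norm_le (f y) (f x)
  linarith [mul_le_mul_of_nonneg_left hy hβ]

theorem sInf_ratio_ge_of_norm_sub_le (f : 𝓕) {γ ε : ℝ} (hγ : 0 ≤ γ)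
    (hfγ : ∀ v, ‖f v‖ ≤ γ * ‖v‖) (hε0 : 0 ≤ ε) (hε1 : ε < 1) (g gR : ι → E)
    (happrox : ∀ m, ‖g m - gR m‖ ≤ ε * ‖g m‖) :
    (1 - ε) * sInf {r : ℝ | ∃ m, gR m ≠ 0 ∧ r = ‖f (gR m)‖ / ‖gR m‖} - γ * ε ≤
      sInf {r : ℝ | ∃ m, g m ≠ 0 ∧ r = ‖f (g m)‖ / ‖g m‖} := by
  have hzero m : g m = 0 ↔ gR m = 0 := eq_zero_iff_of_norm_sub_le_mul hε1 (happrox m)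
  have hβR : 0 ≤ sInf {r : ℝ | ∃ m, gR m ≠ 0 ∧ r = ‖f (gR m)‖ / ‖gR m‖} :=
    Real.sInf_nonneg (by rintro _ ⟨m, -, rfl⟩; positivity)
  by_cases hne : ∃ m, g m ≠ 0
  · obtain ⟨m₀, hm₀⟩ := hne
    refine le_csInf ⟨_, m₀, hm₀, rfl⟩ ?_
    rintro _ ⟨m, hm, rfl⟩
    rw [le_div_iff₀ (norm_pos_iff.mpr hm)]
    exact mul_norm_le_norm_apply_of_norm_sub_le f hγ hfγ hβR (happrox m)
      (sInf_ratio_mul_norm_le f gR (mt (hzero m).mpr hm))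
  · push Not at hne
    have hempty : ∀ (h : ι → E), (∀ m, h m = 0) →
        sInf {r : ℝ | ∃ m, h m ≠ 0 ∧ r = ‖f (h m)‖ / ‖h m‖} = 0 := by
      intro h hh
      simp [hh]
    rw [hempty g hne, hempty gR fun m ↦ (hzero m).mp (hne m)]
    linarith [mul_nonneg hγ hε0]

end RatioBounds

/-- If the reduced-basis surrogate `uR` satisfies `‖u m − uR m‖ ≤ ε ‖u m‖` with
`0 ≤ ε < 1`, then the full observability coefficient `β` and the surrogate
observability coefficient `β_R` satisfy `β ≥ (1 − ε) β_R − γ ε`, where `γ` is the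
noise-weighted operator norm of the observation operator `L`. -/
theorem observability_surrogate_lower_bound
    {M K : ℕ} {U : Type*} [NormedAddCommGroup U] [InnerProductSpace ℝ U]
    (L : U →L[ℝ] EuclideanSpace ℝ (Fin K))
    (SL : Matrix (Fin K) (Fin K) ℝ) (hSL : SL.PosDef)
    (u uR : EuclideanSpace ℝ (Fin M) →ₗ[ℝ] U)
    (ε : ℝ) (hε0 : 0 ≤ ε) (hε1 : ε < 1)
    (happrox : ∀ m, ‖u m - uR m‖ ≤ ε * ‖u m‖)
    (γ : ℝ)
    (hγ : γ = sSup {r : ℝ | ∃ v : U, v ≠ 0 ∧ r = wNorm SL⁻¹ (L v) / ‖v‖})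
    (β : ℝ)
    (hβ : β = sInf {r : ℝ | ∃ m : EuclideanSpace ℝ (Fin M),
      u m ≠ 0 ∧ r = wNorm SL⁻¹ (L (u m)) / ‖u m‖})
    (βR : ℝ)
    (hβR : βR = sInf {r : ℝ | ∃ m : EuclideanSpace ℝ (Fin M),
      uR m ≠ 0 ∧ r = wNorm SL⁻¹ (L (uR m)) / ‖uR m‖}) :
    β ≥ (1 - ε) * βR - γ * ε := by
  set f := (CFC.sqrt SL⁻¹).toEuclideanLin.toContinuousLinearMap.comp L
  have hw v : wNorm SL⁻¹ (L v) = ‖f v‖ :=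
    wNorm_eq_norm_toEuclideanLin_sqrt hSL.inv.posSemidef (L v)
  simp_rw [hw] at hγ hβ hβR
  subst hγ hβ hβR
  have hγ0 := Real.sSup_nonneg (s := {r : ℝ | ∃ v : U, v ≠ 0 ∧ r = ‖f v‖ / ‖v‖})
    (by rintro _ ⟨v, -, rfl⟩; positivity)
  exact sInf_ratio_ge_of_norm_sub_le f hγ0 (norm_apply_le_sSup_ratio_mul f) hε0 hε1 u uR happrox
end
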